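/- arXiv:1505.03447 — 2 statements merged into one kernel-verified Lean document; each statement's English description precedes it below -/
import Mathlib

section
/- For m, n, r real with n > -1, (m+1)/2 > 0, r ≥ 0, and B > 0, the incomplete Toronto function satisfies the upper bound T_B(m,n,r) ≤ r^{2n-m+1} Γ((m+1)/2) · ₁F₁((m+1)/2; n+1; r²) / (Γ(n+1) · e^{r²}). -/
open MeasureTheory Real Filter

noncomputable def uGamma (a x : ℝ) : ℝ := ∫ t in Set.Ioi x, t ^ (a - 1) * Real.exp (-t)

noncomputable def lGamma (a x : ℝ) : ℝ := ∫ t in Set.Ioc 0 x, t ^ (a - 1) * Real.exp (-t)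

noncomputable def poch (x : ℝ) (l : ℕ) : ℝ := ∏ i ∈ Finset.range l, (x + i)

noncomputable def besselI (n x : ℝ) : ℝ :=
  ∑' l : ℕ, (x / 2) ^ (n + 2 * (l : ℝ)) / ((l.factorial : ℝ) * Real.Gamma (n + (l : ℝ) + 1))

noncomputable def oneF₁ (α β x : ℝ) : ℝ :=
  ∑' i : ℕ, (poch α i / poch β i) * x ^ i / (i.factorial : ℝ)

noncomputable def nuttallQ (m n a b : ℝ) : ℝ :=
  ∫ x in Set.Ioi b, x ^ m * Real.exp (-(x ^ 2 + a ^ 2) / 2) * besselI n (a * x)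

noncomputable def nQ (m n a b : ℝ) : ℝ := a ^ (-n) * nuttallQ m n a b

noncomputable def marcumQ (ν a b : ℝ) : ℝ :=
  a ^ (1 - ν) * ∫ x in Set.Ioi b, x ^ ν * Real.exp (-(x ^ 2 + a ^ 2) / 2) * besselI (ν - 1) (a * x)

noncomputable def toronto (B m n r : ℝ) : ℝ :=
  2 * r ^ (n - m + 1) * Real.exp (-r ^ 2) *
    ∫ t in Set.Ioo 0 B, t ^ (m - n) * Real.exp (-t ^ 2) * besselI n (2 * r * t)

/-!
Expanding `I_n` in its power series turns the integrand `t^(m-n) e^(-t²) I_n(2rt)` into a sum of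
nonnegative terms `r^(n+2l) t^(m+2l) e^(-t²) / (l! Γ(n+l+1))`. Enlarging `(0, B)` to `(0, ∞)` can
only increase the integral, and there each term integrates to a Gamma integral
`Γ((m+1)/2 + l) / 2`; with `Γ(x + l) = Γ(x) (x)_l` the resulting series is
`Γ((m+1)/2) r^n ₁F₁((m+1)/2; n+1; r²) / (2 Γ(n+1))`. The final step
`r^(n-m+1) r^n ≤ r^(2n-m+1)` is an equality except at `r = 0`, where `0^0 = 1` intervenes.
-/

lemma poch_succ (x : ℝ) (l : ℕ) : poch x (l + 1) = poch x l * (x + l) := by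
  simp [poch, Finset.prod_range_succ]

lemma poch_pos {x : ℝ} (hx : 0 < x) (l : ℕ) : 0 < poch x l :=
  Finset.prod_pos fun _ _ => by positivity

lemma Gamma_add_natCast_eq_mul_poch {x : ℝ} (hx : 0 < x) (l : ℕ) :
    Gamma (x + l) = Gamma x * poch x l := by
  induction l with
  | zero => simp [poch]
  | succ k ih =>
    rw [Nat.cast_succ, ← add_assoc, Gamma_add_one (by positivity), ih, poch_succ]
    ring

lemma summable_oneF₁_term (α : ℝ) {β : ℝ} (hβ : 0 < β) (y : ℝ) :
    Summable fun l : ℕ => poch α l / poch β l * y ^ l / l.factorial := by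
  refine summable_of_ratio_norm_eventually_le (r := 1 / 2) (by norm_num) ?_
  filter_upwards [tendsto_natCast_atTop_atTop.eventually_ge_atTop |α|,
    tendsto_natCast_atTop_atTop.eventually_ge_atTop (4 * |y|)] with l hlα hly
  have hratio : poch α (l + 1) / poch β (l + 1) * y ^ (l + 1) / (l + 1).factorial =
      poch α l / poch β l * y ^ l / l.factorial * ((α + l) * y / ((β + l) * (l + 1))) := by
    have := (poch_pos hβ l).ne'
    rw [poch_succ, poch_succ, Nat.factorial_succ]
    push_cast
    field_simp
    ring
  have hbound : ‖(α + l) * y / ((β + l) * (l + 1))‖ ≤ 1 / 2 := by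
    have hαl : 0 ≤ α + l := by linarith [neg_abs_le α]
    have hden : 0 < (β + l) * (l + 1) := by positivity
    rw [norm_div, norm_mul, Real.norm_of_nonneg hαl, Real.norm_of_nonneg hden.le,
      Real.norm_eq_abs, div_le_iff₀ hden]
    nlinarith [mul_le_mul (show α + l ≤ 2 * l by linarith [le_abs_self α]) hly (by positivity)
      (by positivity)]
  rw [hratio, norm_mul, mul_comm]
  exact mul_le_mul_of_nonneg_right hbound (norm_nonneg _)

lemma oneF₁_nonneg {α β x : ℝ} (hα : 0 < α) (hβ : 0 < β) (hx : 0 ≤ x) : 0 ≤ oneF₁ α β x :=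
  tsum_nonneg fun i => by have := poch_pos hα i; have := poch_pos hβ i; positivity

lemma rpow_add_two_mul_natCast {x n : ℝ} (hx : 0 ≤ x) (hn : -1 < n) (l : ℕ) :
    x ^ (n + 2 * l) = x ^ n * (x ^ 2) ^ l := by
  rcases l.eq_zero_or_pos with rfl | hl
  · simp
  · have hl' : (1 : ℝ) ≤ l := by exact_mod_cast hl
    rw [rpow_add' hx (by linarith), rpow_mul_natCast hx, rpow_two]

lemma integral_tsum_le_of_hasSum {α : Type*} [MeasurableSpace α] {μ ν : Measure α} (hμν : μ ≤ ν)
    {F : ℕ → α → ℝ} {S : ℝ} (hF_nonneg : ∀ l, 0 ≤ᵐ[ν] F l) (hF_int : ∀ l, Integrable (F l) ν)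
    (hS : HasSum (fun l => ∫ x, F l x ∂ν) S) : ∫ x, ∑' l, F l x ∂μ ≤ S := by
  have hle (l : ℕ) : ∫ x, F l x ∂μ ≤ ∫ x, F l x ∂ν :=
    integral_mono_measure hμν (hF_nonneg l) (hF_int l)
  have hsum : Summable fun l => ∫ x, ‖F l x‖ ∂μ := by
    refine hS.summable.of_nonneg_of_le (fun l => integral_nonneg fun _ => norm_nonneg _)
      fun l => ?_
    rw [integral_congr_ae <|
      ((hF_nonneg l).filter_mono (ae_mono hμν)).mono fun x hx => Real.norm_of_nonneg hx]
    exact hle l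
  exact hasSum_le hle
    (hasSum_integral_of_summable_integral_norm (fun l => (hF_int l).mono_measure hμν) hsum) hS

noncomputable def torontoTerm (m n r : ℝ) (l : ℕ) (t : ℝ) : ℝ :=
  r ^ (n + 2 * l) / (l.factorial * Gamma (n + l + 1)) * (t ^ (m + 2 * l) * exp (-t ^ 2))

lemma torontoTerm_nonneg (m : ℝ) {n r t : ℝ} (hn : -1 < n) (hr : 0 ≤ r) (ht : 0 ≤ t) (l : ℕ) :
    0 ≤ torontoTerm m n r l t := by
  have := Gamma_pos_of_pos (by linarith [l.cast_nonneg (α := ℝ)] : 0 < n + l + 1)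
  unfold torontoTerm
  positivity

lemma toronto_integrand_eq_tsum_torontoTerm (m n : ℝ) {r t : ℝ} (hr : 0 ≤ r) (ht : 0 < t) :
    t ^ (m - n) * exp (-t ^ 2) * besselI n (2 * r * t) = ∑' l, torontoTerm m n r l t := by
  rw [besselI, ← tsum_mul_left]
  refine tsum_congr fun l => ?_
  have hsplit : t ^ (m + 2 * l) = t ^ (m - n) * t ^ (n + 2 * l) := by
    rw [← rpow_add ht]; ring_nf
  rw [torontoTerm, hsplit, show 2 * r * t / 2 = r * t by ring, mul_rpow hr ht.le]
  ring

lemma integrableOn_torontoTerm {m : ℝ} (n r : ℝ) (hm : -1 < m) (l : ℕ) :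
    IntegrableOn (torontoTerm m n r l) (Set.Ioi 0) := by
  have hml : -1 < m + 2 * l := by linarith [l.cast_nonneg (α := ℝ)]
  have hGamma := integrableOn_rpow_mul_exp_neg_rpow hml two_pos
  simp only [rpow_two] at hGamma
  exact hGamma.const_mul _

lemma integral_torontoTerm {m n r : ℝ} (hm : -1 < m) (hn : -1 < n) (hr : 0 ≤ r) (l : ℕ) :
    ∫ t in Set.Ioi 0, torontoTerm m n r l t =
      Gamma ((m + 1) / 2) * r ^ n / (2 * Gamma (n + 1)) *
        (poch ((m + 1) / 2) l / poch (n + 1) l * (r ^ 2) ^ l / l.factorial) := by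
  have hml : -1 < m + 2 * l := by linarith [l.cast_nonneg (α := ℝ)]
  have hGamma := integral_rpow_mul_exp_neg_rpow two_pos hml
  simp only [rpow_two] at hGamma
  unfold torontoTerm
  rw [integral_const_mul, hGamma,
    show (m + 2 * l + 1) / 2 = (m + 1) / 2 + l by ring, show n + l + 1 = n + 1 + l by ring,
    Gamma_add_natCast_eq_mul_poch (by linarith), Gamma_add_natCast_eq_mul_poch (by linarith),
    rpow_add_two_mul_natCast hr hn]
  have := (poch_pos (by linarith : 0 < (m + 1) / 2) l).ne'
  have := (poch_pos (by linarith : 0 < n + 1) l).ne'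
  have := (Gamma_pos_of_pos (by linarith : 0 < n + 1)).ne'
  field_simp

lemma hasSum_integral_torontoTerm {m n r : ℝ} (hm : -1 < m) (hn : -1 < n) (hr : 0 ≤ r) :
    HasSum (fun l => ∫ t in Set.Ioi 0, torontoTerm m n r l t)
      (Gamma ((m + 1) / 2) * r ^ n / (2 * Gamma (n + 1)) *
        oneF₁ ((m + 1) / 2) (n + 1) (r ^ 2)) := by
  simp only [integral_torontoTerm hm hn hr]
  exact ((summable_oneF₁_term _ (by linarith) _).hasSum).mul_left _

theorem stmt8_general (m n r B : ℝ) (hn : -1 < n) (hm : 0 < (m + 1) / 2) (hr : 0 ≤ r) :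
    toronto B m n r ≤
      r ^ (2 * n - m + 1) * Real.Gamma ((m + 1) / 2) * oneF₁ ((m + 1) / 2) (n + 1) (r ^ 2) /
        (Real.Gamma (n + 1) * Real.exp (r ^ 2)) := by
  have hm' : -1 < m := by linarith
  set F := oneF₁ ((m + 1) / 2) (n + 1) (r ^ 2)
  have hF : 0 ≤ F := oneF₁_nonneg hm (by linarith) (sq_nonneg r)
  have hΓn := Gamma_pos_of_pos (by linarith : 0 < n + 1)
  have hΓm := Gamma_pos_of_pos hm
  have hintegral : ∫ t in Set.Ioo 0 B, t ^ (m - n) * exp (-t ^ 2) * besselI n (2 * r * t) ≤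
      Gamma ((m + 1) / 2) * r ^ n / (2 * Gamma (n + 1)) * F := by
    rw [setIntegral_congr_fun measurableSet_Ioo fun t ht =>
      toronto_integrand_eq_tsum_torontoTerm m n hr ht.1]
    exact integral_tsum_le_of_hasSum (Measure.restrict_mono Set.Ioo_subset_Ioi_self le_rfl)
      (fun l => (ae_restrict_mem measurableSet_Ioi).mono fun t ht =>
        torontoTerm_nonneg m hn hr (le_of_lt ht) l)
      (integrableOn_torontoTerm n r hm') (hasSum_integral_torontoTerm hm' hn hr)
  calc toronto B m n r
      ≤ 2 * r ^ (n - m + 1) * exp (-r ^ 2) *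
          (Gamma ((m + 1) / 2) * r ^ n / (2 * Gamma (n + 1)) * F) :=
        mul_le_mul_of_nonneg_left hintegral (by positivity)
    _ = r ^ (n - m + 1) * r ^ n * (Gamma ((m + 1) / 2) * F / (Gamma (n + 1) * exp (r ^ 2))) := by
        rw [exp_neg]
        field_simp
    _ ≤ r ^ (2 * n - m + 1) * (Gamma ((m + 1) / 2) * F / (Gamma (n + 1) * exp (r ^ 2))) := by
        refine mul_le_mul_of_nonneg_right ?_ (by positivity)
        rw [show 2 * n - m + 1 = n - m + 1 + n by ring]
        exact le_rpow_add hr _ _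
    _ = _ := by ring

theorem stmt8 (m n r B : ℝ) (hn : -1 < n) (hm : 0 < (m + 1) / 2) (hr : 0 ≤ r) (hB : 0 < B) :
    toronto B m n r ≤
      r ^ (2 * n - m + 1) * Real.Gamma ((m + 1) / 2) * oneF₁ ((m + 1) / 2) (n + 1) (r ^ 2) /
        (Real.Gamma (n + 1) * Real.exp (r ^ 2)) :=
  stmt8_general m n r B hn hm hr
end

section
/- For reals a ≥ 0, b ≥ 0, and m, n with n > -1 and m+n+1 > 0, the truncation error ε_p = ∑_{l=p+1}^∞ a^{2l} e^{-a²/2} Γ((m+n+2l+1)/2, b²/2) / (l! Γ(n+l+1) 2^{(n-m+2l+1)/2}) of the Nuttall Q series is bounded above by ε_p ≤ Γ((m+n+1)/2) ₁F₁((m+n+1)/2; n+1; a²/2) / (Γ(n+1) 2^{(n-m+1)/2} e^{a²/2}) − ∑_{l=0}^p a^{2l} e^{-a²/2} Γ((m+n+2l+1)/2, b²/2) / (l! Γ(n+l+1) 2^{(n-m+2l+1)/2}). -/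
open MeasureTheory Real Filter

/-! Each term of the series is at most the corresponding term with `Γ(s, b²/2)` replaced by
`Γ(s)`, and after the substitution `Γ(s + l) = (s)ₗ Γ(s)` these dominating terms are, up to a
constant factor, the terms of the Kummer series `₁F₁((m+n+1)/2; n+1; a²/2)`. The tail of a
nonnegative series dominated termwise by a convergent one is at most the dominating sum minus
the partial sum. -/

lemma poch_nonneg {s : ℝ} (hs : 0 ≤ s) (l : ℕ) : 0 ≤ poch s l :=
  Finset.prod_nonneg fun _ _ => by positivity

lemma poch_pos_s11 {s : ℝ} (hs : 0 < s) (l : ℕ) : 0 < poch s l :=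
  Finset.prod_pos fun _ _ => by positivity

lemma Gamma_add_nat_eq_poch_mul_Gamma {s : ℝ} (hs : 0 < s) (l : ℕ) :
    Gamma (s + l) = poch s l * Gamma s := by
  induction l with
  | zero => simp [poch]
  | succ k ih =>
    rw [Nat.cast_succ, ← add_assoc, Gamma_add_one (by positivity), ih]
    simp only [poch, Finset.prod_range_succ]
    ring

lemma poch_le_pow_mul_poch {α β : ℝ} (hα : 0 ≤ α) (hβ : 0 < β) (l : ℕ) :
    poch α l ≤ max 1 (α / β) ^ l * poch β l := by
  set K := max 1 (α / β)
  have hαK : α ≤ K * β := (div_le_iff₀ hβ).mp (le_max_right _ _)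
  have hKpow : K ^ l * poch β l = ∏ i ∈ Finset.range l, K * (β + i) := by
    rw [poch, Finset.prod_mul_distrib, Finset.prod_const, Finset.card_range]
  rw [hKpow, poch]
  refine Finset.prod_le_prod (fun _ _ => by positivity) fun i _ => ?_
  nlinarith [le_max_left 1 (α / β), (Nat.cast_nonneg i : (0 : ℝ) ≤ i)]

noncomputable def oneF₁Term (α β x : ℝ) (l : ℕ) : ℝ :=
  poch α l / poch β l * x ^ l / (l.factorial : ℝ)

lemma summable_oneF₁Term {α β : ℝ} (hα : 0 ≤ α) (hβ : 0 < β) (x : ℝ) :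
    Summable (oneF₁Term α β x) := by
  refine Summable.of_norm_bounded (Real.summable_pow_div_factorial (max 1 (α / β) * |x|))
    fun l => ?_
  have hratio : poch α l / poch β l ≤ max 1 (α / β) ^ l :=
    (div_le_iff₀ (poch_pos_s11 hβ l)).mpr (poch_le_pow_mul_poch hα hβ l)
  rw [oneF₁Term, Real.norm_eq_abs, abs_div, abs_mul, abs_pow, Nat.abs_cast,
    abs_of_nonneg (div_nonneg (poch_nonneg hα l) (poch_pos_s11 hβ l).le), mul_pow]
  gcongr

lemma pow_mul_Gamma_add_nat_div_eq {s β : ℝ} (hs : 0 < s) (hβ : 0 < β) (x : ℝ) (l : ℕ) :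
    x ^ l * Gamma (s + l) / ((l.factorial : ℝ) * Gamma (β + l)) =
      Gamma s / Gamma β * oneF₁Term s β x l := by
  rw [Gamma_add_nat_eq_poch_mul_Gamma hs, Gamma_add_nat_eq_poch_mul_Gamma hβ, oneF₁Term]
  have := (poch_pos_s11 hβ l).ne'
  have := (Gamma_pos_of_pos hβ).ne'
  field_simp

lemma uGamma_nonneg (s : ℝ) {x : ℝ} (hx : 0 ≤ x) : 0 ≤ uGamma s x :=
  setIntegral_nonneg measurableSet_Ioi fun _ ht =>
    mul_nonneg (rpow_nonneg (hx.trans ht.le) _) (exp_pos _).le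

lemma uGamma_le_Gamma {s x : ℝ} (hs : 0 < s) (hx : 0 ≤ x) : uGamma s x ≤ Gamma s := by
  rw [Gamma_eq_integral hs, uGamma]
  simp_rw [mul_comm (_ ^ _)]
  refine setIntegral_mono_set (GammaIntegral_convergent hs) ?_
    (Set.Ioi_subset_Ioi hx).eventuallyLE
  filter_upwards [ae_restrict_mem measurableSet_Ioi] with _ ht
  exact mul_nonneg (exp_pos _).le (rpow_nonneg ht.le _)

lemma tsum_nat_add_le_tsum_sub_sum {f g : ℕ → ℝ} (hf : ∀ l, 0 ≤ f l) (hfg : ∀ l, f l ≤ g l)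
    (hg : Summable g) (k : ℕ) :
    ∑' l, f (l + k) ≤ ∑' l, g l - ∑ l ∈ Finset.range k, f l := by
  have hf' : Summable f := hg.of_nonneg_of_le hf hfg
  rw [le_sub_iff_add_le', hf'.sum_add_tsum_nat_add k]
  exact hf'.tsum_le_tsum hfg hg

noncomputable def nuttallTerm (m n a b : ℝ) (l : ℕ) : ℝ :=
  a ^ (2 * l) * exp (-a ^ 2 / 2) * uGamma ((m + n + 2 * (l : ℝ) + 1) / 2) (b ^ 2 / 2) /
    ((l.factorial : ℝ) * Gamma (n + (l : ℝ) + 1) * (2 : ℝ) ^ ((n - m + 2 * (l : ℝ) + 1) / 2))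

section nuttallTerm

variable {m n : ℝ} (a b : ℝ)

lemma nuttallTerm_nonneg (hn : -1 < n) (l : ℕ) : 0 ≤ nuttallTerm m n a b l := by
  have := Gamma_pos_of_pos (by linarith [(Nat.cast_nonneg l : (0 : ℝ) ≤ l)] : 0 < n + (l : ℝ) + 1)
  have := uGamma_nonneg ((m + n + 2 * (l : ℝ) + 1) / 2) (by positivity : 0 ≤ b ^ 2 / 2)
  rw [nuttallTerm, pow_mul]
  positivity

lemma nuttallTerm_le (hn : -1 < n) (hmn : 0 < m + n + 1) (l : ℕ) :
    nuttallTerm m n a b l ≤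
      Gamma ((m + n + 1) / 2) / (Gamma (n + 1) * (2 : ℝ) ^ ((n - m + 1) / 2) * exp (a ^ 2 / 2)) *
        oneF₁Term ((m + n + 1) / 2) (n + 1) (a ^ 2 / 2) l := by
  have hs : 0 < (m + n + 1) / 2 := by linarith
  have hβ : 0 < n + 1 := by linarith
  have := Gamma_pos_of_pos (by linarith [(Nat.cast_nonneg l : (0 : ℝ) ≤ l)] : 0 < n + 1 + (l : ℝ))
  calc nuttallTerm m n a b l
      ≤ a ^ (2 * l) * exp (-a ^ 2 / 2) * Gamma ((m + n + 1) / 2 + l) /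
          ((l.factorial : ℝ) * Gamma (n + 1 + l) * (2 : ℝ) ^ ((n - m + 1) / 2 + l)) := by
        rw [nuttallTerm, show (m + n + 2 * (l : ℝ) + 1) / 2 = (m + n + 1) / 2 + l by ring,
          show n + (l : ℝ) + 1 = n + 1 + l by ring,
          show (n - m + 2 * (l : ℝ) + 1) / 2 = (n - m + 1) / 2 + l by ring, pow_mul]
        gcongr
        exact uGamma_le_Gamma (by positivity) (by positivity)
    _ = (a ^ 2 / 2) ^ l * Gamma ((m + n + 1) / 2 + l) / ((l.factorial : ℝ) * Gamma (n + 1 + l)) /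
          ((2 : ℝ) ^ ((n - m + 1) / 2) * exp (a ^ 2 / 2)) := by
        rw [rpow_add two_pos, rpow_natCast, pow_mul, div_pow, neg_div, exp_neg]
        field_simp
    _ = _ := by
        rw [pow_mul_Gamma_add_nat_div_eq hs hβ]
        field_simp

end nuttallTerm

theorem stmt11_general (m n a b : ℝ) (hn : -1 < n) (hmn : 0 < m + n + 1)
    (p : ℕ) :
    (∑' l : ℕ,
        a ^ (2 * (p + 1 + l)) * Real.exp (-a ^ 2 / 2) *
          uGamma ((m + n + 2 * ((p : ℝ) + 1 + (l : ℝ)) + 1) / 2) (b ^ 2 / 2) /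
          (((p + 1 + l).factorial : ℝ) * Real.Gamma (n + ((p : ℝ) + 1 + (l : ℝ)) + 1) *
            (2 : ℝ) ^ ((n - m + 2 * ((p : ℝ) + 1 + (l : ℝ)) + 1) / 2))) ≤
      Real.Gamma ((m + n + 1) / 2) * oneF₁ ((m + n + 1) / 2) (n + 1) (a ^ 2 / 2) /
          (Real.Gamma (n + 1) * (2 : ℝ) ^ ((n - m + 1) / 2) * Real.exp (a ^ 2 / 2)) -
        ∑ l ∈ Finset.range (p + 1),
          a ^ (2 * l) * Real.exp (-a ^ 2 / 2) *
            uGamma ((m + n + 2 * (l : ℝ) + 1) / 2) (b ^ 2 / 2) /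
            ((l.factorial : ℝ) * Real.Gamma (n + (l : ℝ) + 1) *
              (2 : ℝ) ^ ((n - m + 2 * (l : ℝ) + 1) / 2)) := by
  have hsum := (summable_oneF₁Term (by linarith : 0 ≤ (m + n + 1) / 2) (by linarith : 0 < n + 1)
    (a ^ 2 / 2)).mul_left
      (Gamma ((m + n + 1) / 2) / (Gamma (n + 1) * (2 : ℝ) ^ ((n - m + 1) / 2) * exp (a ^ 2 / 2)))
  have htail := tsum_nat_add_le_tsum_sub_sum (nuttallTerm_nonneg a b hn)
    (nuttallTerm_le a b hn hmn) hsum (p + 1)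
  rw [tsum_mul_left, ← mul_div_right_comm] at htail
  calc _ = ∑' l, nuttallTerm m n a b (l + (p + 1)) := tsum_congr fun l => by
        rw [nuttallTerm, add_comm l]
        push_cast
        rfl
    _ ≤ _ := htail

theorem stmt11 (m n a b : ℝ) (hn : -1 < n) (hmn : 0 < m + n + 1) (ha : 0 ≤ a) (hb : 0 ≤ b)
    (p : ℕ) :
    (∑' l : ℕ,
        a ^ (2 * (p + 1 + l)) * Real.exp (-a ^ 2 / 2) *
          uGamma ((m + n + 2 * ((p : ℝ) + 1 + (l : ℝ)) + 1) / 2) (b ^ 2 / 2) /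
          (((p + 1 + l).factorial : ℝ) * Real.Gamma (n + ((p : ℝ) + 1 + (l : ℝ)) + 1) *
            (2 : ℝ) ^ ((n - m + 2 * ((p : ℝ) + 1 + (l : ℝ)) + 1) / 2))) ≤
      Real.Gamma ((m + n + 1) / 2) * oneF₁ ((m + n + 1) / 2) (n + 1) (a ^ 2 / 2) /
          (Real.Gamma (n + 1) * (2 : ℝ) ^ ((n - m + 1) / 2) * Real.exp (a ^ 2 / 2)) -
        ∑ l ∈ Finset.range (p + 1),
          a ^ (2 * l) * Real.exp (-a ^ 2 / 2) *
            uGamma ((m + n + 2 * (l : ℝ) + 1) / 2) (b ^ 2 / 2) /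
            ((l.factorial : ℝ) * Real.Gamma (n + (l : ℝ) + 1) *
              (2 : ℝ) ^ ((n - m + 2 * (l : ℝ) + 1) / 2)) :=
  stmt11_general m n a b hn hmn p
end
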